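/- arXiv:2505.06539 — 5 statements merged into one kernel-verified Lean document; each statement's English description precedes it below -/
import Mathlib

section
/- If P(z) is a complex polynomial of degree n having all its zeros in the closed unit disk |z| ≤ 1, then n·max_{|z|=1}|P(z)| ≤ 2·max_{|z|=1}|P'(z)|. -/
open Polynomial Metric Complex Real

/-
Write `P = c ∏ (X - rᵢ)`. Where `P(z) ≠ 0`, the logarithmic derivative gives
`z P'(z) / P(z) = ∑ z / (z - rᵢ)`, and for `|rᵢ| ≤ |z|` every term has real part at least `1/2`
(since `2 Re (z (z - r)‾) = |z - r|² + |z|² - |r|²`). Hence `|z P'(z)| ≥ (n / 2) |P(z)|` at every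
point of the unit circle, and taking suprema gives the theorem.
-/

theorem Complex.one_half_le_re_div_sub {z r : ℂ} (hr : ‖r‖ ≤ ‖z‖) (hzr : z ≠ r) :
    1 / 2 ≤ (z / (z - r)).re := by
  have hpos : 0 < normSq (z - r) := normSq_pos.mpr (sub_ne_zero.mpr hzr)
  have hsq : normSq r ≤ normSq z := by
    rw [normSq_eq_norm_sq, normSq_eq_norm_sq]
    exact pow_le_pow_left₀ (norm_nonneg r) hr 2
  rw [div_re, ← add_div, le_div_iff₀ hpos]
  simp only [normSq_apply, sub_re, sub_im] at hpos hsq ⊢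
  nlinarith

theorem Complex.re_multiset_sum (m : Multiset ℂ) : m.sum.re = (m.map re).sum :=
  map_multiset_sum reAddGroupHom m

theorem Polynomial.natDegree_mul_norm_eval_le_of_norm_roots_le (P : ℂ[X]) {z : ℂ}
    (hroots : ∀ r ∈ P.roots, ‖r‖ ≤ ‖z‖) :
    P.natDegree * ‖P.eval z‖ ≤ 2 * ‖z‖ * ‖P.derivative.eval z‖ := by
  by_cases hPz : P.eval z = 0
  · simp only [hPz, norm_zero, mul_zero]
    positivity
  set S := (P.roots.map fun r ↦ 1 / (z - r)).sum
  have hderiv : P.derivative.eval z = P.eval z * S :=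
    (IsAlgClosed.splits P).eval_derivative_eq_eval_mul_sum hPz
  have hzS : z * S = (P.roots.map fun r ↦ z / (z - r)).sum := by
    simp only [S, ← Multiset.sum_map_mul_left, mul_one_div]
  have hre : (P.natDegree : ℝ) / 2 ≤ (z * S).re := by
    rw [hzS, re_multiset_sum, Multiset.map_map]
    have hterm : ∀ x ∈ P.roots.map (re ∘ fun r ↦ z / (z - r)), 1 / 2 ≤ x := by
      simp only [Multiset.mem_map, Function.comp_apply, forall_exists_index, and_imp]
      rintro _ r hr rfl
      exact one_half_le_re_div_sub (hroots r hr) fun h ↦ hPz (h ▸ isRoot_of_mem_roots hr)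
    have := Multiset.card_nsmul_le_sum hterm
    rwa [Multiset.card_map, IsAlgClosed.card_roots_eq_natDegree, nsmul_eq_mul, mul_one_div] at this
  calc (P.natDegree : ℝ) * ‖P.eval z‖ = 2 * ‖P.eval z‖ * (P.natDegree / 2) := by ring
    _ ≤ 2 * ‖P.eval z‖ * ‖z * S‖ := by gcongr; exact hre.trans (re_le_norm _)
    _ = 2 * ‖z‖ * ‖P.derivative.eval z‖ := by rw [hderiv, norm_mul, norm_mul]; ring

theorem stmt0_general (P : Polynomial ℂ) (n : ℕ) (hdeg : P.natDegree = n)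
    (hroots : ∀ z : ℂ, P.eval z = 0 → ‖z‖ ≤ 1)
    : (n : ℝ) * (⨆ z : sphere (0:ℂ) 1, ‖P.eval ↑z‖) ≤ 2 * (⨆ z : sphere (0:ℂ) 1, ‖P.derivative.eval ↑z‖) := by
  have hbdd : BddAbove (Set.range fun z : sphere (0:ℂ) 1 ↦ ‖P.derivative.eval ↑z‖) :=
    (isCompact_range (by fun_prop)).bddAbove
  rw [Real.mul_iSup_of_nonneg (Nat.cast_nonneg n)]
  refine ciSup_le fun z ↦ ?_
  have hz : ‖(z : ℂ)‖ = 1 := norm_eq_of_mem_sphere z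
  have hpoint := P.natDegree_mul_norm_eval_le_of_norm_roots_le (z := z) fun r hr ↦ by
    rw [hz]; exact hroots r (isRoot_of_mem_roots hr)
  rw [hdeg, hz, mul_one] at hpoint
  exact hpoint.trans (mul_le_mul_of_nonneg_left (le_ciSup hbdd z) zero_le_two)

theorem stmt0 (P : Polynomial ℂ) (n : ℕ) (hn : 1 ≤ n) (hdeg : P.natDegree = n)
    (hroots : ∀ z : ℂ, P.eval z = 0 → ‖z‖ ≤ 1)
    : (n : ℝ) * (⨆ z : sphere (0:ℂ) 1, ‖P.eval ↑z‖) ≤ 2 * (⨆ z : sphere (0:ℂ) 1, ‖P.derivative.eval ↑z‖) :=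
  stmt0_general P n hdeg hroots
end

section
/- If P(z) is a complex polynomial of degree n with all its zeros in the disk |z| ≤ k, where k ≤ 1, then n·max_{|z|=1}|P(z)| ≤ (1+k)·max_{|z|=1}|P'(z)|. -/
open Polynomial Metric Complex Real

/-! For `‖z‖ = 1` with `P z ≠ 0`, the logarithmic derivative gives
`z P'(z) / P(z) = ∑ z / (z - r)` over the roots `r` of `P`. Writing `z / (z - r) = 1 / (1 - w)`
with `‖w‖ = ‖r‖ ≤ k ≤ 1`, each term has real part at least `1 / (1 + k)`, hence
`n ‖P z‖ ≤ (1 + k) ‖P' z‖` at every point of the unit circle; taking suprema gives the theorem. -/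

theorem inv_one_add_le_re_inv_one_sub {w : ℂ} {k : ℝ} (hw : ‖w‖ ≤ k) (hk : k ≤ 1) (hw1 : w ≠ 1) :
    (1 + k)⁻¹ ≤ (1 - w)⁻¹.re := by
  have hpos : 0 < normSq (1 - w) := normSq_pos.mpr (sub_ne_zero.mpr hw1.symm)
  have hwk : normSq w ≤ k * ‖w‖ := by
    rw [normSq_eq_norm_sq, sq]; gcongr
  have hre : -‖w‖ ≤ w.re := neg_le_of_abs_le (abs_re_le_norm w)
  have hnormSq : normSq (1 - w) = 1 - 2 * w.re + normSq w := by
    simp only [normSq_apply, sub_re, sub_im, one_re, one_im]; ring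
  rw [inv_re, sub_re, one_re, inv_le_iff_one_le_mul₀' (by linarith [norm_nonneg w]),
    mul_div_assoc', le_div_iff₀ hpos, hnormSq]
  -- the goal is `‖w‖² ≤ k + (1 - k) Re w`; as `Re w ≥ -‖w‖`, the gap is `≥ (k - ‖w‖)(1 + ‖w‖)`
  nlinarith [norm_nonneg w]

theorem inv_one_add_le_re_mul_one_div_sub {z r : ℂ} {k : ℝ} (hz : ‖z‖ = 1) (hr : ‖r‖ ≤ k)
    (hk : k ≤ 1) (hzr : z ≠ r) : (1 + k)⁻¹ ≤ (z * (1 / (z - r))).re := by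
  have hz0 : z ≠ 0 := norm_ne_zero_iff.mp (by simp [hz])
  have hmobius : z * (1 / (z - r)) = (1 - r / z)⁻¹ := by
    field_simp [sub_ne_zero.mpr hzr]
  rw [hmobius]
  refine inv_one_add_le_re_inv_one_sub (by rwa [norm_div, hz, div_one]) hk ?_
  rwa [Ne, div_eq_one_iff_eq hz0, eq_comm]

theorem card_mul_le_re_sum {s : Multiset ℂ} {c : ℝ} (h : ∀ w ∈ s, c ≤ w.re) :
    s.card * c ≤ s.sum.re := by
  have := Multiset.card_nsmul_le_sum (s := s.map Complex.re) (a := c) (by simpa using h)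
  rwa [Multiset.card_map, nsmul_eq_mul, ← Complex.coe_reAddGroupHom, ← map_multiset_sum] at this

theorem natDegree_mul_norm_eval_le {P : ℂ[X]} {k : ℝ} (hk₀ : 0 ≤ k) (hk : k ≤ 1)
    (hroots : ∀ z, P.eval z = 0 → ‖z‖ ≤ k) {z : ℂ} (hz : ‖z‖ = 1) :
    P.natDegree * ‖P.eval z‖ ≤ (1 + k) * ‖P.derivative.eval z‖ := by
  by_cases hPz : P.eval z = 0
  · rw [hPz, norm_zero, mul_zero]
    positivity
  have hP : P ≠ 0 := by rintro rfl; simp at hPz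
  set S := (P.roots.map fun r => z * (1 / (z - r))).sum
  have hderiv : ‖P.derivative.eval z‖ = ‖P.eval z‖ * ‖S‖ := by
    have hS_eq : S = z * (P.roots.map fun r => 1 / (z - r)).sum := Multiset.sum_map_mul_left
    rw [(IsAlgClosed.splits P).eval_derivative_eq_eval_mul_sum hPz, norm_mul, hS_eq, norm_mul,
      hz, one_mul]
  have hS : P.natDegree * (1 + k)⁻¹ ≤ ‖S‖ := by
    refine le_trans ?_ (re_le_norm S)
    rw [← IsAlgClosed.card_roots_eq_natDegree, ← Multiset.card_map (fun r => z * (1 / (z - r)))]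
    refine card_mul_le_re_sum fun w hw => ?_
    obtain ⟨r, hr, rfl⟩ := Multiset.mem_map.mp hw
    have hr0 : P.eval r = 0 := (mem_roots hP).mp hr
    exact inv_one_add_le_re_mul_one_div_sub hz (hroots r hr0) hk (fun h => hPz (h ▸ hr0))
  rw [hderiv, mul_comm ‖P.eval z‖, ← mul_assoc]
  gcongr
  rwa [← div_le_iff₀' (by linarith), div_eq_mul_inv]

theorem stmt1_general (P : Polynomial ℂ) (n : ℕ) (hdeg : P.natDegree = n)
    (k : ℝ) (hk0 : 0 < k) (hk1 : k ≤ 1)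
    (hroots : ∀ z : ℂ, P.eval z = 0 → ‖z‖ ≤ k)
    : (n : ℝ) * (⨆ z : sphere (0:ℂ) 1, ‖P.eval ↑z‖) ≤ (1 + k) * (⨆ z : sphere (0:ℂ) 1, ‖P.derivative.eval ↑z‖) := by
  have hbdd : BddAbove (Set.range fun z : sphere (0:ℂ) 1 => (1 + k) * ‖P.derivative.eval ↑z‖) :=
    (isCompact_range (by fun_prop)).bddAbove
  rw [Real.mul_iSup_of_nonneg n.cast_nonneg, Real.mul_iSup_of_nonneg (by linarith)]
  exact ciSup_mono hbdd fun z =>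
    hdeg ▸ natDegree_mul_norm_eval_le hk0.le hk1 hroots (mem_sphere_zero_iff_norm.mp z.2)

theorem stmt1 (P : Polynomial ℂ) (n : ℕ) (hn : 1 ≤ n) (hdeg : P.natDegree = n)
    (k : ℝ) (hk0 : 0 < k) (hk1 : k ≤ 1)
    (hroots : ∀ z : ℂ, P.eval z = 0 → ‖z‖ ≤ k)
    : (n : ℝ) * (⨆ z : sphere (0:ℂ) 1, ‖P.eval ↑z‖) ≤ (1 + k) * (⨆ z : sphere (0:ℂ) 1, ‖P.derivative.eval ↑z‖) :=
  stmt1_general P n hdeg k hk0 hk1 hroots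
end

section
/- If P(z) is a polynomial of degree n with all zeros in |z| ≤ k, k ≤ 1, then for every complex number α with |α| ≥ k, n·(|α| − k)·max_{|z|=1}|P(z)| ≤ (1+k)·max_{|z|=1}|D_α P(z)|, where D_α P(z) = nP(z) + (α − z)P'(z). -/
/-!
At a point `z` of the unit circle with `P z ≠ 0`, the logarithmic derivative gives
`z P'(z) = P(z) W` with `W = ∑ z / (z - r)` over the roots `r` of `P`. Each summand lies in the
region `‖w - 1‖ ≤ k ‖w‖` (a disc, or a half-plane when `k = 1`), which is convex, so the mean
`W / n` does too: `‖W - n‖ ≤ k ‖W‖`, whence `n ≤ (1 + k) ‖W‖`. Writing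
`D_α P(z) = α P'(z) - (W - n) P(z)` then gives `‖D_α P(z)‖ ≥ (‖α‖ - k) ‖W‖ ‖P(z)‖`, and the two
bounds combine into the inequality at every point of the circle.
-/

open Polynomial Metric Complex Real

theorem norm_div_sub_sub_one_le {𝕜 : Type*} [NormedField 𝕜] {z r : 𝕜} {k : ℝ}
    (hr : ‖r‖ ≤ k * ‖z‖) (hzr : z ≠ r) : ‖z / (z - r) - 1‖ ≤ k * ‖z / (z - r)‖ := by
  rw [div_sub_one (sub_ne_zero.mpr hzr), sub_sub_cancel, norm_div, norm_div, ← mul_div_assoc]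
  gcongr

namespace Complex

theorem norm_sub_ofReal_sq (w : ℂ) (x : ℝ) : ‖w - x‖ ^ 2 = ‖w‖ ^ 2 - 2 * x * w.re + x ^ 2 := by
  rw [Complex.sq_norm, Complex.sq_norm, normSq_sub]
  simp only [normSq_ofReal, conj_ofReal, mul_re, ofReal_re, ofReal_im, mul_zero, sub_zero]
  ring

theorem norm_sum_sub_card_le {ι : Type*} (s : Finset ι) (w : ι → ℂ) {k : ℝ} (hk0 : 0 ≤ k)
    (hk1 : k ≤ 1) (hw : ∀ i ∈ s, ‖w i - 1‖ ≤ k * ‖w i‖) :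
    ‖∑ i ∈ s, w i - s.card‖ ≤ k * ‖∑ i ∈ s, w i‖ := by
  set W := ∑ i ∈ s, w i
  set n : ℝ := (s.card : ℝ)
  have quadratic : ∀ i ∈ s, (1 - k ^ 2) * ‖w i‖ ^ 2 ≤ 2 * (w i).re - 1 := by
    intro i hi
    have hsq := pow_le_pow_left₀ (norm_nonneg _) (hw i hi) 2
    have hexpand := norm_sub_ofReal_sq (w i) 1
    push_cast at hexpand
    nlinarith
  have summed : (1 - k ^ 2) * ∑ i ∈ s, ‖w i‖ ^ 2 ≤ 2 * W.re - n := by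
    calc (1 - k ^ 2) * ∑ i ∈ s, ‖w i‖ ^ 2 = ∑ i ∈ s, (1 - k ^ 2) * ‖w i‖ ^ 2 := Finset.mul_sum ..
      _ ≤ ∑ i ∈ s, (2 * (w i).re - 1) := Finset.sum_le_sum quadratic
      _ = 2 * W.re - n := by simp [W, n, Finset.sum_sub_distrib, Finset.mul_sum, re_sum]
  have cauchy_schwarz : ‖W‖ ^ 2 ≤ n * ∑ i ∈ s, ‖w i‖ ^ 2 :=
    (pow_le_pow_left₀ (norm_nonneg _) (norm_sum_le _ _) 2).trans sq_sum_le_card_mul_sum_sq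
  have hsq : ‖W - n‖ ^ 2 ≤ (k * ‖W‖) ^ 2 := by
    have hk : 0 ≤ 1 - k ^ 2 := by nlinarith
    nlinarith [norm_sub_ofReal_sq W n, mul_le_mul_of_nonneg_left cauchy_schwarz hk,
      mul_le_mul_of_nonneg_left summed (Nat.cast_nonneg s.card : (0 : ℝ) ≤ n)]
  exact (pow_le_pow_iff_left₀ (norm_nonneg _) (by positivity) two_ne_zero).mp hsq

end Complex

namespace Polynomial

theorem Splits.mul_eval_derivative_eq {K : Type*} [Field K] {P : K[X]} (hP : P.Splits) {z : K}
    (hz : P.eval z ≠ 0) :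
    z * P.derivative.eval z = P.eval z * (P.roots.map fun r => z / (z - r)).sum := by
  rw [hP.eval_derivative_eq_eval_mul_sum hz, mul_left_comm, ← Multiset.sum_map_mul_left]
  simp_rw [mul_one_div]

theorem norm_sum_div_sub_roots_sub_natDegree_le {P : ℂ[X]} {k : ℝ} (hk0 : 0 ≤ k) (hk1 : k ≤ 1)
    (hroots : ∀ z, P.eval z = 0 → ‖z‖ ≤ k) {z : ℂ} (hz : 1 ≤ ‖z‖) (hPz : P.eval z ≠ 0) :
    ‖(P.roots.map fun r => z / (z - r)).sum - P.natDegree‖ ≤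
      k * ‖(P.roots.map fun r => z / (z - r)).sum‖ := by
  classical
  have hsum : (P.roots.map fun r => z / (z - r)).sum = ∑ r : P.roots, z / (z - r.1) := by
    conv_lhs => rw [← Multiset.map_univ_coe P.roots, Multiset.map_map]
    rfl
  have hcard : (Finset.univ : Finset P.roots).card = P.natDegree := by
    rw [Finset.card_univ, Multiset.card_coe]
    exact (IsAlgClosed.splits P).natDegree_eq_card_roots.symm
  rw [hsum, ← hcard]
  refine Complex.norm_sum_sub_card_le _ _ hk0 hk1 fun r _ => ?_
  have hr := mem_roots'.mp (Multiset.coe_mem (x := r))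
  refine norm_div_sub_sub_one_le ((hroots _ hr.2).trans (le_mul_of_one_le_right hk0 hz)) ?_
  rintro rfl
  exact hPz hr.2

noncomputable def polarDeriv {R : Type*} [CommRing R] (α : R) (P : R[X]) : R[X] :=
  C (P.natDegree : R) * P + (C α - X) * derivative P

@[simp]
theorem eval_polarDeriv {R : Type*} [CommRing R] (α : R) (P : R[X]) (z : R) :
    (polarDeriv α P).eval z = P.natDegree * P.eval z + (α - z) * P.derivative.eval z := by
  simp [polarDeriv]

theorem natDegree_mul_norm_eval_le_norm_eval_polarDeriv {P : ℂ[X]} {k : ℝ} (hk0 : 0 ≤ k)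
    (hk1 : k ≤ 1) (hroots : ∀ z, P.eval z = 0 → ‖z‖ ≤ k) {α : ℂ} (hα : k ≤ ‖α‖) {z : ℂ}
    (hz : ‖z‖ = 1) :
    P.natDegree * (‖α‖ - k) * ‖P.eval z‖ ≤ (1 + k) * ‖(polarDeriv α P).eval z‖ := by
  rcases eq_or_ne (P.eval z) 0 with hPz | hPz
  · rw [hPz, norm_zero, mul_zero]
    positivity
  set n := P.natDegree
  set W := (P.roots.map fun r => z / (z - r)).sum
  have hlog : z * P.derivative.eval z = P.eval z * W :=
    (IsAlgClosed.splits P).mul_eval_derivative_eq hPz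
  have hW : ‖W - n‖ ≤ k * ‖W‖ :=
    norm_sum_div_sub_roots_sub_natDegree_le hk0 hk1 hroots hz.ge hPz
  have hn : (n : ℝ) ≤ (1 + k) * ‖W‖ := by
    calc (n : ℝ) = ‖(n : ℂ)‖ := (Complex.norm_natCast n).symm
      _ ≤ ‖W‖ + ‖W - n‖ := norm_le_insert _ _
      _ ≤ (1 + k) * ‖W‖ := by linarith
  have hderiv : ‖P.derivative.eval z‖ = ‖W‖ * ‖P.eval z‖ := by
    simpa [hz, mul_comm] using congr_arg norm hlog
  have hpolar : (polarDeriv α P).eval z = α * P.derivative.eval z - (W - n) * P.eval z := by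
    rw [eval_polarDeriv]
    linear_combination -hlog
  have hlower : (‖α‖ - k) * ‖W‖ * ‖P.eval z‖ ≤ ‖(polarDeriv α P).eval z‖ := by
    calc (‖α‖ - k) * ‖W‖ * ‖P.eval z‖ = ‖α * P.derivative.eval z‖ - k * ‖W‖ * ‖P.eval z‖ := by
          rw [norm_mul, hderiv]; ring
      _ ≤ ‖α * P.derivative.eval z‖ - ‖(W - n) * P.eval z‖ := by
          gcongr
          rw [norm_mul]
          gcongr
      _ ≤ ‖(polarDeriv α P).eval z‖ := hpolar ▸ norm_sub_norm_le _ _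
  have hαk : 0 ≤ ‖α‖ - k := sub_nonneg.mpr hα
  calc (n : ℝ) * (‖α‖ - k) * ‖P.eval z‖ ≤ (1 + k) * ‖W‖ * (‖α‖ - k) * ‖P.eval z‖ := by gcongr
    _ = (1 + k) * ((‖α‖ - k) * ‖W‖ * ‖P.eval z‖) := by ring
    _ ≤ (1 + k) * ‖(polarDeriv α P).eval z‖ := by gcongr

end Polynomial

theorem stmt5_general (P : Polynomial ℂ) (n : ℕ) (hdeg : P.natDegree = n)
    (k : ℝ) (hk0 : 0 < k) (hk1 : k ≤ 1)
    (hroots : ∀ z : ℂ, P.eval z = 0 → ‖z‖ ≤ k)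
    (α : ℂ) (hα : k ≤ ‖α‖)
    : (n : ℝ) * (‖α‖ - k) * (⨆ z : sphere (0:ℂ) 1, ‖P.eval ↑z‖) ≤ (1 + k) * (⨆ z : sphere (0:ℂ) 1, ‖((n : ℂ) * P.eval ↑z + (α - ↑z) * P.derivative.eval ↑z)‖) := by
  subst hdeg
  simp_rw [← eval_polarDeriv]
  have hbdd :
      BddAbove (Set.range fun z : sphere (0 : ℂ) 1 => (1 + k) * ‖(polarDeriv α P).eval ↑z‖) :=
    (isCompact_range (by fun_prop)).bddAbove
  calc (P.natDegree : ℝ) * (‖α‖ - k) * (⨆ z : sphere (0 : ℂ) 1, ‖P.eval ↑z‖)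
      = ⨆ z : sphere (0 : ℂ) 1, P.natDegree * (‖α‖ - k) * ‖P.eval ↑z‖ :=
        Real.mul_iSup_of_nonneg (by have := sub_nonneg.mpr hα; positivity) _
    _ ≤ ⨆ z : sphere (0 : ℂ) 1, (1 + k) * ‖(polarDeriv α P).eval ↑z‖ :=
        ciSup_mono hbdd fun z => natDegree_mul_norm_eval_le_norm_eval_polarDeriv hk0.le hk1 hroots
          hα (norm_eq_of_mem_sphere z)
    _ = (1 + k) * ⨆ z : sphere (0 : ℂ) 1, ‖(polarDeriv α P).eval ↑z‖ :=
        (Real.mul_iSup_of_nonneg (by linarith) _).symm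

theorem stmt5 (P : Polynomial ℂ) (n : ℕ) (hn : 1 ≤ n) (hdeg : P.natDegree = n)
    (k : ℝ) (hk0 : 0 < k) (hk1 : k ≤ 1)
    (hroots : ∀ z : ℂ, P.eval z = 0 → ‖z‖ ≤ k)
    (α : ℂ) (hα : k ≤ ‖α‖)
    : (n : ℝ) * (‖α‖ - k) * (⨆ z : sphere (0:ℂ) 1, ‖P.eval ↑z‖) ≤ (1 + k) * (⨆ z : sphere (0:ℂ) 1, ‖((n : ℂ) * P.eval ↑z + (α - ↑z) * P.derivative.eval ↑z)‖) :=
  stmt5_general P n hdeg k hk0 hk1 hroots α hα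
end

section
/- If P(z) = a_n z^n + Σ_{j=μ}^{n} a_{n-j} z^{n-j} (1 ≤ μ ≤ n) has degree n and all its zeros in |z| ≤ k, k ≤ 1, then for every complex α with |α| ≥ k^μ, n·(|α| − k^μ)·max_{|z|=1}|P(z)| ≤ (1+k^μ)·max_{|z|=1}|D_α P(z)|. -/
/-!
Put `n = deg P`, and for `w ≠ 0` let `z = w⁻¹`. The reversed polynomials
`N(w) = w^n (n P(z) - z P'(z))` and `D(w) = w^(n-1) P'(z)` satisfy: `N` vanishes to order `μ` at `0`
(this is exactly the coefficient gap), and for `|w| < 1/k` the logarithmic derivative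
`z P'(z) / P(z) = Σ_r z / (z - r)` has real part `≥ n/2`, which forces `D(w) ≠ 0` and
`|N(w)| ≤ |D(w)|`. A Schwarz-lemma argument (maximum modulus for `N / (w^μ D)` on discs of radius
`< 1/k`) then gives `|n P(z) - z P'(z)| ≤ k^μ |P'(z)|` on `|z| = 1`. The theorem follows by the
triangle inequality applied to `n P = (n P - z P') + z P'` and `D_α P = α P' - (z P' - n P)`.
-/

open Polynomial Metric Complex Real

theorem Complex.half_le_re_inv_one_sub {u : ℂ} (hu : ‖u‖ ≤ 1) (hu1 : u ≠ 1) :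
    1 / 2 ≤ ((1 - u)⁻¹).re := by
  have hpos : 0 < normSq (1 - u) := normSq_pos.mpr (sub_ne_zero.mpr hu1.symm)
  have hu' : normSq u ≤ 1 := by
    rw [normSq_eq_norm_sq]; nlinarith [norm_nonneg u]
  rw [inv_re, le_div_iff₀ hpos]
  simp only [normSq_apply, sub_re, sub_im, one_re, one_im] at *
  nlinarith

theorem Complex.norm_natCast_sub_le_norm {W : ℂ} (n : ℕ) (h : n / 2 ≤ W.re) :
    ‖(n : ℂ) - W‖ ≤ ‖W‖ := by
  rw [norm_def, norm_def]
  refine Real.sqrt_le_sqrt ?_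
  simp only [normSq_apply, sub_re, sub_im, natCast_re, natCast_im]
  nlinarith [Nat.cast_nonneg (α := ℝ) n]

theorem Complex.mul_norm_le_norm_of_forall_mem_sphere {f g : ℂ → ℂ} (hf : Differentiable ℂ f)
    (hg : Differentiable ℂ g) {ρ c : ℝ} (hρ : 0 < ρ) (hc : 0 ≤ c)
    (hg0 : ∀ w ∈ closedBall (0 : ℂ) ρ, g w ≠ 0)
    (hsphere : ∀ u ∈ sphere (0 : ℂ) ρ, c * ‖f u‖ ≤ ‖g u‖) :
    ∀ w ∈ closedBall (0 : ℂ) ρ, c * ‖f w‖ ≤ ‖g w‖ := by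
  have hquot : ∀ w ∈ closedBall (0 : ℂ) ρ, ‖(c : ℂ) * f w / g w‖ ≤ 1 ↔ c * ‖f w‖ ≤ ‖g w‖ :=
    fun w hw => by
      rw [norm_div, norm_mul, norm_real, Real.norm_of_nonneg hc,
        div_le_one (norm_pos_iff.mpr (hg0 w hw))]
  have hdiff : DiffContOnCl ℂ (fun w => (c : ℂ) * f w / g w) (ball 0 ρ) := by
    refine DifferentiableOn.diffContOnCl ?_
    rw [closure_ball _ hρ.ne']
    exact ((hf.const_mul _).differentiableOn).div hg.differentiableOn hg0
  intro w hw
  refine (hquot w hw).mp (norm_le_of_forall_mem_frontier_norm_le isBounded_ball hdiff ?_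
    (by rwa [closure_ball _ hρ.ne']))
  rw [frontier_ball _ hρ.ne']
  exact fun u hu => (hquot u (sphere_subset_closedBall hu)).mpr (hsphere u hu)

theorem Complex.pow_mul_norm_le_norm_of_forall_mem_ball {f g : ℂ → ℂ} (hf : Differentiable ℂ f)
    (hg : Differentiable ℂ g) {R : ℝ} (hR : 0 < R) (μ : ℕ)
    (hfg : ∀ w ∈ ball (0 : ℂ) R, g w ≠ 0 ∧ ‖w‖ ^ μ * ‖f w‖ ≤ ‖g w‖) :
    ∀ w ∈ closedBall (0 : ℂ) R, R ^ μ * ‖f w‖ ≤ ‖g w‖ := by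
  have hball : ∀ w ∈ ball (0 : ℂ) R, R ^ μ * ‖f w‖ ≤ ‖g w‖ := by
    intro w hw
    have hwR : ‖w‖ < R := mem_ball_zero_iff.mp hw
    have hradii : Set.Ioo ‖w‖ R ⊆ {ρ : ℝ | ρ ^ μ * ‖f w‖ ≤ ‖g w‖} := by
      rintro ρ ⟨hwρ, hρR⟩
      have hsub : closedBall (0 : ℂ) ρ ⊆ ball 0 R := closedBall_subset_ball hρR
      have hρ : 0 < ρ := (norm_nonneg w).trans_lt hwρ
      refine mul_norm_le_norm_of_forall_mem_sphere hf hg hρ (pow_nonneg hρ.le μ)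
        (fun u hu => (hfg u (hsub hu)).1) (fun u hu => ?_) w (mem_closedBall_zero_iff.mpr hwρ.le)
      rw [← mem_sphere_zero_iff_norm.mp hu]
      exact (hfg u (hsub (sphere_subset_closedBall hu))).2
    have hclosed : IsClosed {ρ : ℝ | ρ ^ μ * ‖f w‖ ≤ ‖g w‖} :=
      isClosed_le (by fun_prop) continuous_const
    have := hclosed.closure_subset_iff.mpr hradii
    rw [closure_Ioo hwR.ne] at this
    exact this ⟨hwR.le, le_rfl⟩
  have hclosed : IsClosed {w : ℂ | R ^ μ * ‖f w‖ ≤ ‖g w‖} :=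
    isClosed_le (continuous_const.mul hf.continuous.norm) hg.continuous.norm
  rw [← closure_ball _ hR.ne']
  exact hclosed.closure_subset_iff.mpr hball

theorem Complex.sub_mul_norm_le_mul_norm_add_sub_mul {A B z α : ℂ} {c : ℝ} (hz : ‖z‖ = 1)
    (hc : 0 ≤ c) (hcα : c ≤ ‖α‖) (h : ‖A - z * B‖ ≤ c * ‖B‖) :
    (‖α‖ - c) * ‖A‖ ≤ (1 + c) * ‖A + (α - z) * B‖ := by
  have hA : ‖A‖ ≤ (1 + c) * ‖B‖ :=
    calc ‖A‖ = ‖(A - z * B) + z * B‖ := by ring_nf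
      _ ≤ c * ‖B‖ + ‖B‖ := by grw [norm_add_le, h, norm_mul, hz, one_mul]
      _ = (1 + c) * ‖B‖ := by ring
  have hD : (‖α‖ - c) * ‖B‖ ≤ ‖A + (α - z) * B‖ :=
    calc (‖α‖ - c) * ‖B‖ ≤ ‖α * B‖ - ‖A - z * B‖ := by rw [norm_mul]; linarith
      _ ≤ ‖α * B + (A - z * B)‖ := norm_sub_le_norm_add _ _
      _ = ‖A + (α - z) * B‖ := by ring_nf
  calc (‖α‖ - c) * ‖A‖ ≤ (‖α‖ - c) * ((1 + c) * ‖B‖) := by gcongr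
    _ = (1 + c) * ((‖α‖ - c) * ‖B‖) := by ring
    _ ≤ (1 + c) * ‖A + (α - z) * B‖ := by gcongr

namespace Polynomial

theorem pow_mul_norm_eval_le_of_X_pow_dvd {N D : ℂ[X]} {μ : ℕ} (hN : X ^ μ ∣ N) {R : ℝ}
    (hR : 0 < R) (hND : ∀ w ∈ ball (0 : ℂ) R, D.eval w ≠ 0 ∧ ‖N.eval w‖ ≤ ‖D.eval w‖) :
    ∀ w ∈ closedBall (0 : ℂ) R, R ^ μ * ‖N.eval w‖ ≤ ‖w‖ ^ μ * ‖D.eval w‖ := by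
  obtain ⟨N₁, rfl⟩ := hN
  have hnorm : ∀ w : ℂ, ‖(X ^ μ * N₁).eval w‖ = ‖w‖ ^ μ * ‖N₁.eval w‖ := fun w => by
    rw [eval_mul, eval_pow, eval_X, norm_mul, norm_pow]
  intro w hw
  have h := Complex.pow_mul_norm_le_norm_of_forall_mem_ball N₁.differentiable D.differentiable hR μ
    (fun u hu => by simpa only [hnorm] using hND u hu) w hw
  rw [hnorm]
  calc R ^ μ * (‖w‖ ^ μ * ‖N₁.eval w‖) = ‖w‖ ^ μ * (R ^ μ * ‖N₁.eval w‖) := by ring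
    _ ≤ ‖w‖ ^ μ * ‖D.eval w‖ := by gcongr

theorem half_natDegree_le_re_mul_eval_derivative_div {P : ℂ[X]} {k : ℝ}
    (hroots : ∀ r : ℂ, P.eval r = 0 → ‖r‖ ≤ k) {z : ℂ} (hz0 : z ≠ 0) (hz : k < ‖z‖) :
    (P.natDegree : ℝ) / 2 ≤ (z * P.derivative.eval z / P.eval z).re := by
  have hPz : P.eval z ≠ 0 := fun h => (hroots z h).not_gt hz
  have hsplits : P.Splits := IsAlgClosed.splits P
  have hterm : ∀ r ∈ P.roots, 1 / 2 ≤ (z * (1 / (z - r))).re := by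
    intro r hr
    have hrz : ‖r / z‖ ≤ 1 := by
      rw [norm_div, div_le_one (norm_pos_iff.mpr hz0)]
      exact ((hroots r (mem_roots'.mp hr).2).trans hz.le)
    have hne : r / z ≠ 1 := by
      rw [Ne, div_eq_one_iff_eq hz0]
      rintro rfl
      exact hPz (mem_roots'.mp hr).2
    -- `z / (z - r) = (1 - r / z)⁻¹`
    convert half_le_re_inv_one_sub hrz hne using 2
    field_simp
  rw [mul_div_assoc, hsplits.eval_derivative_div_eval_of_ne_zero hPz, ← Multiset.sum_map_mul_left,
    show ∀ s : Multiset ℂ, s.sum.re = (s.map re).sum from map_multiset_sum reAddGroupHom,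
    Multiset.map_map]
  calc (P.natDegree : ℝ) / 2 = Multiset.card P.roots • (1 / 2 : ℝ) := by
        rw [splits_iff_card_roots.mp hsplits, nsmul_eq_mul]; ring
    _ ≤ _ := by
      rw [← Multiset.card_map (re ∘ fun r => z * (1 / (z - r)))]
      refine Multiset.card_nsmul_le_sum fun x hx => ?_
      obtain ⟨r, hr, rfl⟩ := Multiset.mem_map.mp hx
      exact hterm r hr

theorem norm_natDegree_mul_eval_sub_le {P : ℂ[X]} {k : ℝ}
    (hroots : ∀ r : ℂ, P.eval r = 0 → ‖r‖ ≤ k) {z : ℂ} (hz0 : z ≠ 0) (hz : k < ‖z‖) :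
    ‖(P.natDegree : ℂ) * P.eval z - z * P.derivative.eval z‖ ≤ ‖z * P.derivative.eval z‖ := by
  have hPz : P.eval z ≠ 0 := fun h => (hroots z h).not_gt hz
  set W := z * P.derivative.eval z / P.eval z with hW
  have hsub : (P.natDegree : ℂ) * P.eval z - z * P.derivative.eval z
      = P.eval z * (P.natDegree - W) := by
    rw [hW]; field_simp
  have hmul : z * P.derivative.eval z = P.eval z * W := by
    rw [hW]; field_simp
  rw [hsub, hmul, norm_mul, norm_mul]
  gcongr
  exact norm_natCast_sub_le_norm _ (half_natDegree_le_re_mul_eval_derivative_div hroots hz0 hz)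

theorem eval_derivative_ne_zero_of_lt_norm {P : ℂ[X]} (hP : 1 ≤ P.natDegree) {k : ℝ}
    (hroots : ∀ r : ℂ, P.eval r = 0 → ‖r‖ ≤ k) {z : ℂ} (hz0 : z ≠ 0) (hz : k < ‖z‖) :
    P.derivative.eval z ≠ 0 := by
  intro h
  have hre := half_natDegree_le_re_mul_eval_derivative_div hroots hz0 hz
  rw [h, mul_zero, zero_div, zero_re] at hre
  have : (1 : ℝ) ≤ P.natDegree := by exact_mod_cast hP
  linarith

theorem coeff_natCast_mul_sub_X_mul_derivative {R : Type*} [CommRing R] (P : R[X]) (n i : ℕ) :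
    (C (n : R) * P - X * derivative P).coeff i = ((n : R) - i) * P.coeff i := by
  rcases i with _ | i
  · simp
  · simp [coeff_X_mul, coeff_derivative]
    ring

theorem X_pow_dvd_reflect_natCast_mul_sub_X_mul_derivative {R : Type*} [CommRing R] {P : R[X]}
    {μ : ℕ} (hgap : ∀ j, 1 ≤ j → j < μ → P.coeff (P.natDegree - j) = 0) :
    X ^ μ ∣ reflect P.natDegree (C (P.natDegree : R) * P - X * derivative P) := by
  rw [X_pow_dvd_iff]
  intro d hd
  rw [coeff_reflect, coeff_natCast_mul_sub_X_mul_derivative]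
  rcases Nat.eq_zero_or_pos d with rfl | hd0
  · simp
  by_cases hdn : d ≤ P.natDegree
  · rw [revAt_le hdn, hgap d hd0 hd, mul_zero]
  · rw [revAt_eq_self_of_lt (by omega), coeff_eq_zero_of_natDegree_lt (by omega), mul_zero]

theorem eval_reflect_mul_inv_pow {K : Type*} [Field K] {N : ℕ} {f : K[X]} (hf : f.natDegree ≤ N)
    {w : K} (hw : w ≠ 0) : (reflect N f).eval w * w⁻¹ ^ N = f.eval w⁻¹ := by
  have : Invertible w⁻¹ := invertibleOfNonzero (inv_ne_zero hw)
  have h := eval₂_reflect_mul_pow (RingHom.id K) w⁻¹ N f hf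
  rwa [invOf_eq_inv, inv_inv] at h

theorem natDegree_natCast_mul_sub_X_mul_derivative_le {R : Type*} [CommRing R] (P : R[X]) :
    (C (P.natDegree : R) * P - X * derivative P).natDegree ≤ P.natDegree :=
  natDegree_le_iff_coeff_eq_zero.mpr fun i hi => by
    rw [coeff_natCast_mul_sub_X_mul_derivative, coeff_eq_zero_of_natDegree_lt hi, mul_zero]

theorem eval_reflect_natCast_mul_sub_X_mul_derivative_mul_inv_pow {K : Type*} [Field K] (P : K[X])
    {w : K} (hw : w ≠ 0) :
    (reflect P.natDegree (C (P.natDegree : K) * P - X * derivative P)).eval w * w⁻¹ ^ P.natDegree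
      = P.natDegree * P.eval w⁻¹ - w⁻¹ * P.derivative.eval w⁻¹ := by
  rw [eval_reflect_mul_inv_pow (natDegree_natCast_mul_sub_X_mul_derivative_le P) hw]
  simp

theorem eval_reflect_derivative_mul_inv_pow {K : Type*} [Field K] {P : K[X]} (hP : 1 ≤ P.natDegree)
    {w : K} (hw : w ≠ 0) :
    (reflect (P.natDegree - 1) (derivative P)).eval w * w⁻¹ ^ P.natDegree
      = w⁻¹ * P.derivative.eval w⁻¹ := by
  rw [← pow_sub_one_mul (by omega), ← mul_assoc,
    eval_reflect_mul_inv_pow (natDegree_derivative_le P) hw, mul_comm]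

theorem eval_reflect_derivative_ne_zero_and_norm_le {P : ℂ[X]} (hP : 1 ≤ P.natDegree) {k : ℝ}
    (hk : 0 < k) (hroots : ∀ r : ℂ, P.eval r = 0 → ‖r‖ ≤ k) {w : ℂ} (hw : w ∈ ball (0 : ℂ) k⁻¹) :
    (reflect (P.natDegree - 1) (derivative P)).eval w ≠ 0 ∧
      ‖(reflect P.natDegree (C (P.natDegree : ℂ) * P - X * derivative P)).eval w‖
        ≤ ‖(reflect (P.natDegree - 1) (derivative P)).eval w‖ := by
  rcases eq_or_ne w 0 with rfl | hw0
  · simp only [← coeff_zero_eq_eval_zero, coeff_reflect, revAt_zero,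
      coeff_natCast_mul_sub_X_mul_derivative, sub_self, zero_mul, norm_zero, norm_nonneg, and_true]
    rw [coeff_derivative, ← Nat.cast_succ, Nat.sub_add_cancel hP]
    have hP0 : P ≠ 0 := by rintro rfl; simp at hP
    exact mul_ne_zero (leadingCoeff_ne_zero.mpr hP0) (Nat.cast_ne_zero.mpr (by omega))
  have hz0 : w⁻¹ ≠ 0 := inv_ne_zero hw0
  have hz : k < ‖w⁻¹‖ := by
    rw [norm_inv]
    exact (lt_inv_comm₀ (norm_pos_iff.mpr hw0) hk).mp (mem_ball_zero_iff.mp hw)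
  have hD := eval_reflect_derivative_mul_inv_pow hP hw0
  constructor
  · intro h0
    rw [h0, zero_mul, eq_comm, mul_eq_zero] at hD
    exact eval_derivative_ne_zero_of_lt_norm hP hroots hz0 hz (hD.resolve_left hz0)
  · refine le_of_mul_le_mul_right ?_ (norm_pos_iff.mpr (pow_ne_zero P.natDegree hz0))
    rw [← norm_mul, ← norm_mul, eval_reflect_natCast_mul_sub_X_mul_derivative_mul_inv_pow P hw0, hD]
    exact norm_natDegree_mul_eval_sub_le hroots hz0 hz

theorem norm_natDegree_mul_eval_sub_le_pow_mul {P : ℂ[X]} (hP : 1 ≤ P.natDegree) {k : ℝ}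
    (hk0 : 0 < k) (hk1 : k ≤ 1) (hroots : ∀ r : ℂ, P.eval r = 0 → ‖r‖ ≤ k) {μ : ℕ}
    (hgap : ∀ j, 1 ≤ j → j < μ → P.coeff (P.natDegree - j) = 0) {z : ℂ} (hz : ‖z‖ = 1) :
    ‖(P.natDegree : ℂ) * P.eval z - z * P.derivative.eval z‖ ≤ k ^ μ * ‖P.derivative.eval z‖ := by
  have hz0 : z ≠ 0 := norm_ne_zero_iff.mp (by rw [hz]; exact one_ne_zero)
  have hzinv : ‖z⁻¹‖ = 1 := by rw [norm_inv, hz, inv_one]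
  have hzpow : ‖z ^ P.natDegree‖ = 1 := by rw [norm_pow, hz, one_pow]
  set N := reflect P.natDegree (C (P.natDegree : ℂ) * P - X * derivative P)
  set D := reflect (P.natDegree - 1) (derivative P)
  have hNz := eval_reflect_natCast_mul_sub_X_mul_derivative_mul_inv_pow P (inv_ne_zero hz0)
  have hDz := eval_reflect_derivative_mul_inv_pow hP (inv_ne_zero hz0)
  rw [inv_inv] at hNz hDz
  have hN : ‖N.eval z⁻¹‖ = ‖(P.natDegree : ℂ) * P.eval z - z * P.derivative.eval z‖ := by
    rw [← mul_one ‖N.eval z⁻¹‖, ← hzpow, ← norm_mul, hNz]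
  have hD : ‖D.eval z⁻¹‖ = ‖P.derivative.eval z‖ := by
    rw [← mul_one ‖D.eval z⁻¹‖, ← hzpow, ← norm_mul, hDz, norm_mul, hz, one_mul]
  have h := pow_mul_norm_eval_le_of_X_pow_dvd
    (X_pow_dvd_reflect_natCast_mul_sub_X_mul_derivative hgap) (inv_pos.mpr hk0)
    (fun w hw => eval_reflect_derivative_ne_zero_and_norm_le hP hk0 hroots hw) z⁻¹
    (by rw [mem_closedBall_zero_iff, hzinv]; exact one_le_inv₀ hk0 |>.mpr hk1)
  rwa [hN, hD, hzinv, one_pow, one_mul, inv_pow, inv_mul_le_iff₀ (pow_pos hk0 μ)] at h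

end Polynomial

theorem stmt6_general (P : Polynomial ℂ) (n : ℕ) (hn : 1 ≤ n) (hdeg : P.natDegree = n)
    (k : ℝ) (hk0 : 0 < k) (hk1 : k ≤ 1)
    (hroots : ∀ z : ℂ, P.eval z = 0 → ‖z‖ ≤ k)
    (μ : ℕ)
    (hgap : ∀ j, 1 ≤ j → j < μ → P.coeff (n - j) = 0)
    (α : ℂ) (hα : k ^ μ ≤ ‖α‖)
    : (n : ℝ) * (‖α‖ - k ^ μ) * (⨆ z : sphere (0:ℂ) 1, ‖P.eval ↑z‖) ≤ (1 + k ^ μ) * (⨆ z : sphere (0:ℂ) 1, ‖((n : ℂ) * P.eval ↑z + (α - ↑z) * P.derivative.eval ↑z)‖) := by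
  subst hdeg
  have hpointwise : ∀ z : sphere (0 : ℂ) 1, (P.natDegree : ℝ) * (‖α‖ - k ^ μ) * ‖P.eval ↑z‖
      ≤ (1 + k ^ μ) * ‖(P.natDegree : ℂ) * P.eval ↑z + (α - ↑z) * P.derivative.eval ↑z‖ := by
    intro ⟨z, hz_mem⟩
    have hz : ‖z‖ = 1 := mem_sphere_zero_iff_norm.mp hz_mem
    have h := Complex.sub_mul_norm_le_mul_norm_add_sub_mul hz (by positivity) hα
      (norm_natDegree_mul_eval_sub_le_pow_mul hn hk0 hk1 hroots hgap hz)
    rw [norm_mul, Complex.norm_natCast] at h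
    linarith
  have hbdd : BddAbove (Set.range fun z : sphere (0 : ℂ) 1 =>
      (1 + k ^ μ) * ‖(P.natDegree : ℂ) * P.eval ↑z + (α - ↑z) * P.derivative.eval ↑z‖) :=
    (isCompact_range (by fun_prop)).bddAbove
  rw [Real.mul_iSup_of_nonneg (mul_nonneg (Nat.cast_nonneg _) (sub_nonneg.mpr hα)),
    Real.mul_iSup_of_nonneg (by positivity)]
  exact ciSup_mono hbdd hpointwise

theorem stmt6 (P : Polynomial ℂ) (n : ℕ) (hn : 1 ≤ n) (hdeg : P.natDegree = n)
    (k : ℝ) (hk0 : 0 < k) (hk1 : k ≤ 1)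
    (hroots : ∀ z : ℂ, P.eval z = 0 → ‖z‖ ≤ k)
    (μ : ℕ) (hμ1 : 1 ≤ μ) (hμn : μ ≤ n)
    (hgap : ∀ j, 1 ≤ j → j < μ → P.coeff (n - j) = 0)
    (α : ℂ) (hα : k ^ μ ≤ ‖α‖)
    : (n : ℝ) * (‖α‖ - k ^ μ) * (⨆ z : sphere (0:ℂ) 1, ‖P.eval ↑z‖) ≤ (1 + k ^ μ) * (⨆ z : sphere (0:ℂ) 1, ‖((n : ℂ) * P.eval ↑z + (α - ↑z) * P.derivative.eval ↑z)‖) :=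
  stmt6_general P n hn hdeg k hk0 hk1 hroots μ hgap α hα
end

section
/- Let P(z) = a_n z^n + Σ_{j=μ}^{n} a_{n-j} z^{n-j} (1 ≤ μ ≤ n) be a polynomial of degree n having all its zeros in |z| ≤ k where k ≤ 1, and let Q(z) = z^n · conj(P(1/conj(z))) and m = min_{|z|=k}|P(z)|. Then for |z| = 1, k^μ |P'(z)| ≥ |Q'(z)| + n·m/k^{n−μ}. -/
open Polynomial Metric Complex Real

/-!
Write `R = nP - zP'`. On the unit circle `‖Q'(z)‖ = ‖R(z)‖`. If every zero `t` of `P` satisfies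
`‖t‖ ≤ ‖z‖` then `Re (z / (z - t)) ≥ 1/2`, and `zP'/P = ∑ z / (z - t)` gives `‖R(z)‖ ≤ ‖z P'(z)‖`.
The gap in the coefficients makes `deg R ≤ n - μ`, so the maximum modulus principle applied to
`w^(n-μ) R(1/w) / (w^(n-1) P'(1/w))` on `‖w‖ ≤ 1/k` (where `P'(1/w) ≠ 0` by Gauss–Lucas) turns this
into `‖R(z)‖ ≤ k^μ ‖P'(z)‖` for `‖z‖ = 1`.

When `m > 0`, the minimum modulus principle gives `‖P(x)‖ ≥ m ‖x / k‖^n` for `‖x‖ ≥ k`, so for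
`‖c‖ < m / k^n` the polynomial `P - c z^n` still has all its zeros in `‖z‖ < k`, and it has the same
`R`. Choosing the argument of `c` so that `c n z^(n-1)` points in the direction of `P'(z)` and
letting `‖c‖ → m / k^n` produces the extra term `n m / k^(n-μ)`.
-/

-- The polar derivative `nP + (α - X) P'` of `P` with respect to `α = 0`.
noncomputable def polarDerivZero {R : Type*} [CommRing R] (n : ℕ) (P : R[X]) : R[X] :=
  C (n : R) * P - X * derivative P

section polarDerivZero

variable {R : Type*} [CommRing R]

lemma coeff_polarDerivZero (n : ℕ) (P : R[X]) (i : ℕ) :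
    (polarDerivZero n P).coeff i = ((n : R) - i) * P.coeff i := by
  rw [polarDerivZero, coeff_sub, coeff_C_mul]
  cases i with
  | zero => simp
  | succ j =>
    rw [coeff_X_mul, coeff_derivative]
    push_cast
    ring

lemma eval_polarDerivZero (n : ℕ) (P : R[X]) (z : R) :
    (polarDerivZero n P).eval z = n * P.eval z - z * (derivative P).eval z := by
  simp [polarDerivZero]

lemma natDegree_polarDerivZero_le {P : R[X]} {n μ : ℕ} (hdeg : P.natDegree = n)
    (hgap : ∀ j, 1 ≤ j → j < μ → P.coeff (n - j) = 0) :
    (polarDerivZero n P).natDegree ≤ n - μ := by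
  rw [natDegree_le_iff_coeff_eq_zero]
  intro i hi
  rw [coeff_polarDerivZero]
  rcases lt_trichotomy i n with h | rfl | h
  · have := hgap (n - i) (by omega) (by omega)
    rw [Nat.sub_sub_self h.le] at this
    rw [this, mul_zero]
  · simp
  · rw [coeff_eq_zero_of_natDegree_lt (hdeg ▸ h), mul_zero]

lemma polarDerivZero_sub_C_mul_X_pow (n : ℕ) (P : R[X]) (c : R) :
    polarDerivZero n (P - C c * X ^ n) = polarDerivZero n P := by
  ext i
  simp only [coeff_polarDerivZero, coeff_sub, coeff_C_mul_X_pow]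
  split_ifs with h
  · subst h; ring
  · ring

end polarDerivZero

lemma natDegree_sub_C_mul_X_pow {R : Type*} [Ring R] {P : R[X]} {n : ℕ} (hdeg : P.natDegree = n)
    {c : R} (hc : c ≠ P.coeff n) : (P - C c * X ^ n).natDegree = n := by
  refine le_antisymm ?_ (le_natDegree_of_ne_zero ?_)
  · exact (natDegree_sub_le _ _).trans (max_le hdeg.le (natDegree_C_mul_X_pow_le c n))
  · simpa [sub_eq_zero] using hc.symm

lemma eval_zero_reflect {R : Type*} [Semiring R] (p : R[X]) (N : ℕ) :
    (reflect N p).eval 0 = p.coeff N := by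
  simp [← coeff_zero_eq_eval_zero, coeff_reflect]

lemma norm_eval_reflect_mul_inv_pow {p : ℂ[X]} {N : ℕ} (h : p.natDegree ≤ N) {w : ℂ}
    (hw : w ≠ 0) : ‖(reflect N p).eval w‖ * ‖w‖⁻¹ ^ N = ‖p.eval w⁻¹‖ := by
  have : Invertible w⁻¹ := invertibleOfNonzero (inv_ne_zero hw)
  have := eval₂_reflect_mul_pow (RingHom.id ℂ) w⁻¹ N p h
  simp only [eval₂_id, invOf_eq_inv, inv_inv] at this
  rw [← this, norm_mul, norm_pow, norm_inv]

lemma norm_eval_derivative_eq_norm_eval_polarDerivZero {P Q : ℂ[X]} {n : ℕ}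
    (hQ : ∀ z : ℂ, z ≠ 0 → Q.eval z = z ^ n * (starRingEnd ℂ) (P.eval (1 / (starRingEnd ℂ) z)))
    {z : ℂ} (hz : ‖z‖ = 1) :
    ‖(derivative Q).eval z‖ = ‖(polarDerivZero n P).eval z‖ := by
  set Pconj := P.map (starRingEnd ℂ)
  have hz0 : z ≠ 0 := norm_ne_zero_iff.1 (by rw [hz]; exact one_ne_zero)
  have hQ' : ∀ w ≠ 0, Q.eval w = w ^ n * Pconj.eval w⁻¹ := fun w hw ↦ by
    rw [hQ w hw, ← eval_map_apply]
    simp [Pconj]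
  have hderiv := (hasDerivAt_pow n z).mul ((Pconj.hasDerivAt z⁻¹).comp z (hasDerivAt_inv hz0))
  have hQd := (Q.hasDerivAt z).unique (hderiv.congr_of_eventuallyEq
    ((eventually_ne_nhds hz0).mono fun w hw ↦ hQ' w hw))
  have hpow : (n : ℂ) * z ^ (n - 1) * z = n * z ^ n := by
    cases n <;> simp [pow_succ]
    ring
  have key : (derivative Q).eval z * z = z ^ n * (starRingEnd ℂ) ((polarDerivZero n P).eval z) := by
    rw [hQd, Function.comp_apply, derivative_map, inv_eq_conj hz, eval_map_apply, eval_map_apply,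
      eval_polarDerivZero, map_sub, map_mul, map_mul, map_natCast, ← inv_eq_conj hz]
    field_simp
    linear_combination (starRingEnd ℂ) (P.eval z) * z * hpow
  simpa [hz] using congrArg norm key

lemma half_le_re_div_sub {z t : ℂ} (h : ‖t‖ ≤ ‖z‖) (hne : z ≠ t) : 1 / 2 ≤ (z / (z - t)).re := by
  have hpos : 0 < normSq (z - t) := normSq_pos.2 (sub_ne_zero.2 hne)
  have hsq : normSq t ≤ normSq z := by
    simpa only [← normSq_eq_norm_sq] using pow_le_pow_left₀ (norm_nonneg t) h 2
  rw [div_re, ← add_div, le_div_iff₀ hpos]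
  simp only [normSq_apply, sub_re, sub_im] at *
  nlinarith

lemma norm_ofReal_sub_le_norm {x : ℝ} {w : ℂ} (hx0 : 0 ≤ x) (hx : x ≤ 2 * w.re) :
    ‖(x : ℂ) - w‖ ≤ ‖w‖ := by
  rw [norm_def, norm_def]
  apply Real.sqrt_le_sqrt
  simp only [normSq_apply, sub_re, sub_im, ofReal_re, ofReal_im]
  nlinarith

lemma norm_eval_polarDerivZero_le (P : ℂ[X]) {z : ℂ} (hroots : ∀ t ∈ P.roots, ‖t‖ ≤ ‖z‖) :
    ‖(polarDerivZero P.natDegree P).eval z‖ ≤ ‖z‖ * ‖(derivative P).eval z‖ := by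
  rw [eval_polarDerivZero]
  by_cases hz : P.eval z = 0
  · simp [hz]
  set W := (P.roots.map fun t ↦ z / (z - t)).sum
  have hne : ∀ t ∈ P.roots, z ≠ t := fun t ht h ↦ hz (h ▸ isRoot_of_mem_roots ht)
  have hzP' : z * (derivative P).eval z = P.eval z * W := by
    rw [(IsAlgClosed.splits P).eval_derivative_eq_eval_mul_sum hz, mul_left_comm,
      ← Multiset.sum_map_mul_left]
    simp only [mul_one_div, W]
  have hreW : (P.natDegree : ℝ) ≤ 2 * W.re := by
    have hsum : W.re = (P.roots.map fun t ↦ (z / (z - t)).re).sum := by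
      simpa [Function.comp_def] using
        map_multiset_sum reAddGroupHom (P.roots.map fun t ↦ z / (z - t))
    have hle := Multiset.card_nsmul_le_sum (a := (1 / 2 : ℝ))
      (Multiset.forall_mem_map_iff.2 fun t ht ↦ half_le_re_div_sub (hroots t ht) (hne t ht))
    rw [Multiset.card_map, ← (IsAlgClosed.splits P).natDegree_eq_card_roots, nsmul_eq_mul] at hle
    linarith
  have key := norm_ofReal_sub_le_norm (Nat.cast_nonneg _) hreW
  push_cast at key
  calc ‖(P.natDegree : ℂ) * P.eval z - z * (derivative P).eval z‖
      = ‖P.eval z‖ * ‖(P.natDegree : ℂ) - W‖ := by rw [hzP', ← norm_mul, mul_sub, mul_comm]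
    _ ≤ ‖P.eval z‖ * ‖W‖ := by gcongr
    _ = ‖z‖ * ‖(derivative P).eval z‖ := by rw [← norm_mul, ← hzP', norm_mul]

lemma eval_derivative_ne_zero_of_roots_lt {P : ℂ[X]} (hP : 0 < P.natDegree) {z : ℂ}
    (hroots : ∀ t ∈ P.roots, ‖t‖ < ‖z‖) : (derivative P).eval z ≠ 0 := by
  intro hz
  have hP0 : P ≠ 0 := ne_zero_of_natDegree_gt hP
  have hsub : P.rootSet ℂ ⊆ ball 0 ‖z‖ := fun t ht ↦ by
    rw [mem_rootSet, coe_aeval_eq_eval] at ht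
    simpa using hroots t ((mem_roots hP0).2 ht.2)
  have hz' : z ∈ (derivative P).rootSet ℂ := by
    rw [mem_rootSet, coe_aeval_eq_eval]
    refine ⟨fun h ↦ ?_, hz⟩
    rw [derivative_eq_zero.1 h] at hP
    exact lt_irrefl 0 hP
  have := convexHull_min hsub (convex_ball 0 ‖z‖)
    (rootSet_derivative_subset_convexHull_rootSet (natDegree_pos_iff_degree_pos.1 hP) hz')
  simp at this

lemma norm_le_mul_norm_of_forall_mem_sphere {f g : ℂ → ℂ} (hf : Differentiable ℂ f)
    (hg : Differentiable ℂ g) {r c : ℝ} (hg0 : ∀ w ∈ closedBall (0 : ℂ) r, g w ≠ 0)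
    (hsphere : ∀ w ∈ sphere (0 : ℂ) r, ‖f w‖ ≤ c * ‖g w‖) {w : ℂ} (hw : w ∈ closedBall (0 : ℂ) r) :
    ‖f w‖ ≤ c * ‖g w‖ := by
  have hfg : ∀ w ∈ closedBall (0 : ℂ) r, ‖f w / g w‖ ≤ c ↔ ‖f w‖ ≤ c * ‖g w‖ := fun w hw ↦ by
    rw [norm_div, div_le_iff₀ (norm_pos_iff.2 (hg0 w hw))]
  have hdiff : DiffContOnCl ℂ (fun w ↦ f w / g w) (closedBall 0 r) := by
    apply DifferentiableOn.diffContOnCl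
    rw [isClosed_closedBall.closure_eq]
    exact hf.differentiableOn.div hg.differentiableOn hg0
  refine (hfg w hw).1 (norm_le_of_forall_mem_frontier_norm_le isBounded_closedBall hdiff
    (fun u hu ↦ ?_) (subset_closure hw))
  have hu' := frontier_closedBall_subset_sphere hu
  exact (hfg u (sphere_subset_closedBall hu')).2 (hsphere u hu')

lemma norm_eval_polarDerivZero_le_pow_mul_of_roots_lt {P : ℂ[X]} {n μ : ℕ} {k : ℝ} (hn : 0 < n)
    (hdeg : P.natDegree = n) (hμ : μ ≤ n) (hR : (polarDerivZero n P).natDegree ≤ n - μ)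
    (hk0 : 0 < k) (hk1 : k ≤ 1) (hroots : ∀ t ∈ P.roots, ‖t‖ < k) {z : ℂ} (hz : ‖z‖ = 1) :
    ‖(polarDerivZero n P).eval z‖ ≤ k ^ μ * ‖(derivative P).eval z‖ := by
  set R := polarDerivZero n P
  have hP' : (derivative P).natDegree ≤ n - 1 := hdeg ▸ natDegree_derivative_le P
  have hB : ∀ w ∈ closedBall (0 : ℂ) k⁻¹, (reflect (n - 1) (derivative P)).eval w ≠ 0 := by
    intro w hw
    rcases eq_or_ne w 0 with rfl | hw0
    · rw [eval_zero_reflect, coeff_derivative, Nat.sub_add_cancel hn]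
      refine mul_ne_zero ?_ (Nat.cast_add_one_ne_zero _)
      rw [← hdeg, coeff_natDegree, leadingCoeff_ne_zero]
      exact ne_zero_of_natDegree_gt (hdeg ▸ hn)
    · have hkw : k ≤ ‖w⁻¹‖ := by
        rw [mem_closedBall_zero_iff] at hw
        rw [norm_inv]; exact (le_inv_comm₀ hk0 (norm_pos_iff.2 hw0)).2 hw
      have := eval_derivative_ne_zero_of_roots_lt (hdeg ▸ hn)
        (fun t ht ↦ (hroots t ht).trans_le hkw)
      intro h
      have h' := norm_eval_reflect_mul_inv_pow hP' hw0
      rw [h, norm_zero, zero_mul, eq_comm, norm_eq_zero] at h'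
      exact this h'
  have hsphere : ∀ w ∈ sphere (0 : ℂ) k⁻¹,
      ‖(reflect (n - μ) R).eval w‖ ≤ k ^ μ * ‖(reflect (n - 1) (derivative P)).eval w‖ := by
    intro w hw
    rw [mem_sphere_zero_iff_norm] at hw
    have hw0 : w ≠ 0 := norm_ne_zero_iff.1 (hw ▸ (inv_pos.2 hk0).ne')
    have hx : ‖w⁻¹‖ = k := by rw [norm_inv, hw, inv_inv]
    have hA := norm_eval_reflect_mul_inv_pow hR hw0
    have hB := norm_eval_reflect_mul_inv_pow hP' hw0
    rw [hw, inv_inv] at hA hB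
    have hlag := norm_eval_polarDerivZero_le P (z := w⁻¹) fun t ht ↦ hx ▸ (hroots t ht).le
    rw [hdeg, ← hA, ← hB, hx] at hlag
    have hpow : k * k ^ (n - 1) = k ^ μ * k ^ (n - μ) := by
      rw [← pow_succ', ← pow_add]; congr 1; omega
    refine le_of_mul_le_mul_right ?_ (pow_pos hk0 (n - μ))
    calc _ ≤ k * (‖(reflect (n - 1) (derivative P)).eval w‖ * k ^ (n - 1)) := hlag
      _ = _ := by rw [mul_left_comm, hpow]; ring
  have hz' : z⁻¹ ∈ closedBall (0 : ℂ) k⁻¹ := by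
    rw [mem_closedBall_zero_iff, norm_inv, hz, inv_one]
    exact one_le_inv₀ hk0 |>.2 hk1
  have key := norm_le_mul_norm_of_forall_mem_sphere (Polynomial.differentiable _)
    (Polynomial.differentiable _) hB hsphere hz'
  have hz0 : z⁻¹ ≠ 0 := inv_ne_zero (norm_ne_zero_iff.1 (by rw [hz]; exact one_ne_zero))
  have hA : ‖(reflect (n - μ) R).eval z⁻¹‖ = ‖R.eval z‖ := by
    simpa [hz] using norm_eval_reflect_mul_inv_pow hR hz0
  have hB : ‖(reflect (n - 1) (derivative P)).eval z⁻¹‖ = ‖(derivative P).eval z‖ := by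
    simpa [hz] using norm_eval_reflect_mul_inv_pow hP' hz0
  rwa [hA, hB] at key

lemma norm_eval_polarDerivZero_le_pow_mul {P : ℂ[X]} {n μ : ℕ} {k : ℝ} (hn : 0 < n)
    (hdeg : P.natDegree = n) (hμ : μ ≤ n) (hR : (polarDerivZero n P).natDegree ≤ n - μ)
    (hk0 : 0 < k) (hk1 : k ≤ 1) (hroots : ∀ t ∈ P.roots, ‖t‖ ≤ k) {z : ℂ} (hz : ‖z‖ = 1) :
    ‖(polarDerivZero n P).eval z‖ ≤ k ^ μ * ‖(derivative P).eval z‖ := by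
  rcases hk1.lt_or_eq with hk1 | rfl
  · refine ContinuousWithinAt.closure_le (s := Set.Ioo k 1) (g := fun k' ↦ k' ^ μ * _) ?_
      continuousWithinAt_const (by fun_prop) ?_
    · rw [closure_Ioo hk1.ne]
      exact Set.left_mem_Icc.2 hk1.le
    · rintro k' ⟨hk', hk'1⟩
      exact norm_eval_polarDerivZero_le_pow_mul_of_roots_lt hn hdeg hμ hR (hk0.trans hk') hk'1.le
        (fun t ht ↦ (hroots t ht).trans_lt hk') hz
  · simpa [hz, hdeg] using norm_eval_polarDerivZero_le P (z := z) (by simpa [hz] using hroots)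

-- As `‖x‖ ^ n * ‖(reflect n P).eval x⁻¹‖ = ‖P.eval x‖`, this is the minimum modulus principle for
-- `P` on `k ≤ ‖x‖`.
lemma le_pow_mul_norm_eval_reflect {P : ℂ[X]} {k m : ℝ} (hk : 0 < k) (hm : 0 ≤ m)
    (hroots : ∀ x : ℂ, k ≤ ‖x‖ → P.eval x ≠ 0) (hmin : ∀ ζ : ℂ, ‖ζ‖ = k → m ≤ ‖P.eval ζ‖)
    {w : ℂ} (hw : ‖w‖ ≤ k⁻¹) : m ≤ k ^ P.natDegree * ‖(reflect P.natDegree P).eval w‖ := by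
  have hP : P ≠ 0 := fun h ↦ hroots k (by simpa using le_abs_self k) (by simp [h])
  have hB : ∀ w ∈ closedBall (0 : ℂ) k⁻¹, (reflect P.natDegree P).eval w ≠ 0 := by
    intro w hw
    rcases eq_or_ne w 0 with rfl | hw0
    · rw [eval_zero_reflect, coeff_natDegree]
      exact leadingCoeff_ne_zero.2 hP
    · intro h
      have := norm_eval_reflect_mul_inv_pow (p := P) le_rfl hw0
      rw [h, norm_zero, zero_mul, eq_comm, norm_eq_zero] at this
      rw [mem_closedBall_zero_iff] at hw
      exact hroots _ (by rw [norm_inv]; exact (le_inv_comm₀ hk (norm_pos_iff.2 hw0)).2 hw) this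
  have hsphere : ∀ w ∈ sphere (0 : ℂ) k⁻¹,
      ‖(m : ℂ)‖ ≤ k ^ P.natDegree * ‖(reflect P.natDegree P).eval w‖ := by
    intro w hw
    rw [mem_sphere_zero_iff_norm] at hw
    have hw0 : w ≠ 0 := norm_ne_zero_iff.1 (hw ▸ (inv_pos.2 hk).ne')
    have := norm_eval_reflect_mul_inv_pow (p := P) le_rfl hw0
    rw [hw, inv_inv] at this
    rw [norm_real, Real.norm_of_nonneg hm, mul_comm, this]
    exact hmin _ (by rw [norm_inv, hw, inv_inv])
  simpa [abs_of_nonneg hm] using norm_le_mul_norm_of_forall_mem_sphere (differentiable_const _)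
    (Polynomial.differentiable _) hB hsphere (mem_closedBall_zero_iff.2 hw)

lemma norm_lt_of_mem_roots_sub_C_mul_X_pow {P : ℂ[X]} {n : ℕ} {k m : ℝ} (hk : 0 < k)
    (hdeg : P.natDegree ≤ n) (hrefl : ∀ w : ℂ, ‖w‖ ≤ k⁻¹ → m ≤ k ^ n * ‖(reflect n P).eval w‖)
    {c : ℂ} (hc : k ^ n * ‖c‖ < m) {t : ℂ} (ht : t ∈ (P - C c * X ^ n).roots) : ‖t‖ < k := by
  by_contra! hkt
  have ht0 : t ≠ 0 := norm_pos_iff.1 (hk.trans_le hkt)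
  have hPt : P.eval t = c * t ^ n := by
    simpa [sub_eq_zero] using isRoot_of_mem_roots ht
  have hrt := norm_eval_reflect_mul_inv_pow hdeg (inv_ne_zero ht0)
  rw [inv_inv, hPt, norm_mul, norm_pow, norm_inv, inv_inv] at hrt
  have hmc := hrefl t⁻¹ (by rw [norm_inv]; exact inv_anti₀ hk hkt)
  rw [mul_right_cancel₀ (pow_ne_zero n (norm_ne_zero_iff.2 ht0)) hrt] at hmc
  linarith

lemma norm_eval_polarDerivZero_le_pow_mul_norm_sub {P : ℂ[X]} {n μ : ℕ} {k m : ℝ} (hn : 0 < n)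
    (hdeg : P.natDegree = n) (hμ : μ ≤ n) (hR : (polarDerivZero n P).natDegree ≤ n - μ)
    (hk0 : 0 < k) (hk1 : k ≤ 1)
    (hrefl : ∀ w : ℂ, ‖w‖ ≤ k⁻¹ → m ≤ k ^ n * ‖(reflect n P).eval w‖)
    {c : ℂ} (hc : k ^ n * ‖c‖ < m) {z : ℂ} (hz : ‖z‖ = 1) :
    ‖(polarDerivZero n P).eval z‖ ≤ k ^ μ * ‖(derivative P).eval z - c * (n * z ^ (n - 1))‖ ∧
      (derivative P).eval z - c * (n * z ^ (n - 1)) ≠ 0 := by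
  have hcoeff : c ≠ P.coeff n := by
    intro hcn
    have := hrefl 0 (by rw [norm_zero]; exact (inv_pos.2 hk0).le)
    rw [eval_zero_reflect, ← hcn] at this
    linarith
  have hdegc := natDegree_sub_C_mul_X_pow hdeg hcoeff
  have hroots : ∀ t ∈ (P - C c * X ^ n).roots, ‖t‖ < k := fun t ht ↦
    norm_lt_of_mem_roots_sub_C_mul_X_pow hk0 hdeg.le hrefl hc ht
  have hderiv : (derivative (P - C c * X ^ n)).eval z
      = (derivative P).eval z - c * (n * z ^ (n - 1)) := by
    simp only [derivative_sub, derivative_C_mul_X_pow, eval_sub, eval_mul, eval_C, eval_pow,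
      eval_X]
    ring
  rw [← hderiv, ← polarDerivZero_sub_C_mul_X_pow n P c]
  rw [← polarDerivZero_sub_C_mul_X_pow n P c] at hR
  refine ⟨norm_eval_polarDerivZero_le_pow_mul_of_roots_lt hn hdegc hμ hR hk0 hk1 hroots hz, ?_⟩
  refine eval_derivative_ne_zero_of_roots_lt (by rw [hdegc]; exact hn) fun t ht ↦ ?_
  rw [hz]
  exact (hroots t ht).trans_le hk1

lemma add_mul_le_of_forall_norm_lt {d v : ℂ} {a K M : ℝ} (hM : 0 < M) (hv : v ≠ 0)
    (h : ∀ c : ℂ, ‖c‖ < M → a ≤ K * ‖d - c * v‖ ∧ d - c * v ≠ 0) :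
    a + K * (‖v‖ * M) ≤ K * ‖d‖ := by
  have hv' : 0 < ‖v‖ := norm_pos_iff.2 hv
  have hd : 0 < ‖d‖ := by simpa using (h 0 (by simpa using hM)).2
  have hvM : ‖v‖ * M ≤ ‖d‖ := by
    by_contra! hlt
    refine (h (d / v) ?_).2 (by rw [div_mul_cancel₀ _ hv, sub_self])
    rw [norm_div, div_lt_iff₀ hv']
    linarith
  have hs : ∀ s ∈ Set.Ico 0 (‖v‖ * M), a + K * s ≤ K * ‖d‖ := by
    rintro s ⟨hs0, hs⟩
    -- `c * v` points in the direction of `d`, so `‖d - c * v‖ = ‖d‖ - s`.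
    set c : ℂ := ((s / ‖d‖ : ℝ) : ℂ) * d / v
    have hc : ‖c‖ < M := by
      rw [norm_div, norm_mul, norm_real, Real.norm_of_nonneg (by positivity),
        div_mul_cancel₀ _ hd.ne', div_lt_iff₀ hv']
      linarith
    have hdc : ‖d - c * v‖ = ‖d‖ - s := by
      rw [div_mul_cancel₀ _ hv, ← one_sub_mul, ← ofReal_one, ← ofReal_sub, norm_mul, norm_real,
        Real.norm_of_nonneg (by rw [sub_nonneg, div_le_one hd]; linarith)]
      field_simp
    have := (h c hc).1
    rw [hdc] at this
    linarith
  exact ContinuousWithinAt.closure_le (f := fun s ↦ a + K * s)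
    (by rw [closure_Ico (mul_pos hv' hM).ne]; exact Set.right_mem_Icc.2 (mul_pos hv' hM).le)
    (by fun_prop) continuousWithinAt_const hs

theorem stmt16_general (P : Polynomial ℂ) (n : ℕ) (hn : 1 ≤ n) (hdeg : P.natDegree = n)
    (k : ℝ) (hk0 : 0 < k) (hk1 : k ≤ 1)
    (hroots : ∀ z : ℂ, P.eval z = 0 → ‖z‖ ≤ k)
    (μ : ℕ) (hμn : μ ≤ n)
    (hgap : ∀ j, 1 ≤ j → j < μ → P.coeff (n - j) = 0)
    (Q : Polynomial ℂ)
    (hQ : ∀ z : ℂ, z ≠ 0 → Q.eval z = z ^ n * (starRingEnd ℂ) (P.eval (1 / (starRingEnd ℂ) z)))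
    (m : ℝ) (hm : m = (⨅ z : sphere (0:ℂ) k, ‖P.eval ↑z‖))
    : ∀ z : ℂ, ‖z‖ = 1 →
      ‖Q.derivative.eval z‖ + (n : ℝ) * m / k ^ (n - μ) ≤ k ^ μ * ‖P.derivative.eval z‖ := by
  intro z hz
  rw [norm_eval_derivative_eq_norm_eval_polarDerivZero hQ hz]
  have hR := natDegree_polarDerivZero_le hdeg hgap
  have hroots' : ∀ t ∈ P.roots, ‖t‖ ≤ k := fun t ht ↦ hroots t (isRoot_of_mem_roots ht)
  have hm0 : 0 ≤ m := hm ▸ Real.iInf_nonneg fun _ ↦ norm_nonneg _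
  have hmin : ∀ ζ : ℂ, ‖ζ‖ = k → m ≤ ‖P.eval ζ‖ := fun ζ hζ ↦
    hm ▸ ciInf_le ⟨0, by rintro _ ⟨_, rfl⟩; positivity⟩ (⟨ζ, by simpa using hζ⟩ : sphere (0 : ℂ) k)
  rcases hm0.eq_or_lt with rfl | hm0
  · simpa using norm_eval_polarDerivZero_le_pow_mul hn hdeg hμn hR hk0 hk1 hroots' hz
  have hPne : ∀ x : ℂ, k ≤ ‖x‖ → P.eval x ≠ 0 := fun x hx h ↦ by
    have := hmin x ((hroots x h).antisymm hx)
    rw [h, norm_zero] at this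
    linarith
  have hrefl : ∀ w : ℂ, ‖w‖ ≤ k⁻¹ → m ≤ k ^ n * ‖(reflect n P).eval w‖ := by
    subst hdeg
    exact fun w hw ↦ le_pow_mul_norm_eval_reflect hk0 hm0.le hPne hmin hw
  have hz0 : z ≠ 0 := norm_ne_zero_iff.1 (by rw [hz]; exact one_ne_zero)
  have key := add_mul_le_of_forall_norm_lt (M := m / k ^ n) (by positivity)
    (mul_ne_zero (Nat.cast_ne_zero.2 (by omega)) (pow_ne_zero _ hz0)) fun c hc ↦
      norm_eval_polarDerivZero_le_pow_mul_norm_sub hn hdeg hμn hR hk0 hk1 hrefl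
        (by rwa [lt_div_iff₀ (by positivity), mul_comm] at hc) hz
  have hk : k ^ n = k ^ μ * k ^ (n - μ) := by rw [← pow_add, Nat.add_sub_cancel' hμn]
  rw [norm_mul, norm_pow, hz, one_pow, mul_one, Complex.norm_natCast, hk] at key
  convert key using 2
  field_simp

theorem stmt16 (P : Polynomial ℂ) (n : ℕ) (hn : 1 ≤ n) (hdeg : P.natDegree = n)
    (k : ℝ) (hk0 : 0 < k) (hk1 : k ≤ 1)
    (hroots : ∀ z : ℂ, P.eval z = 0 → ‖z‖ ≤ k)
    (μ : ℕ) (hμ1 : 1 ≤ μ) (hμn : μ ≤ n)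
    (hgap : ∀ j, 1 ≤ j → j < μ → P.coeff (n - j) = 0)
    (Q : Polynomial ℂ)
    (hQ : ∀ z : ℂ, z ≠ 0 → Q.eval z = z ^ n * (starRingEnd ℂ) (P.eval (1 / (starRingEnd ℂ) z)))
    (m : ℝ) (hm : m = (⨅ z : sphere (0:ℂ) k, ‖P.eval ↑z‖))
    : ∀ z : ℂ, ‖z‖ = 1 →
      ‖Q.derivative.eval z‖ + (n : ℝ) * m / k ^ (n - μ) ≤ k ^ μ * ‖P.derivative.eval z‖ :=
  stmt16_general P n hn hdeg k hk0 hk1 hroots μ hμn hgap Q hQ m hm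
end
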